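/- arXiv:0905.0209 — 2 statements merged into one kernel-verified Lean document; each statement's English description precedes it below -/
import Mathlib

section
/- Let C_μ : Fin n → ℝ and Λ : Fin n → Fin n → Fin n → ℝ with lowered version Λ_{μεν} (three lower indices, skew in the last two: Λ_{μεν} = -Λ_{μνε}). Define φ_{μν} := ∑_β C_β Ω^β_{μν} where Ω^β_{μν} is defined from a contortion γ with Λ^β_{μν} = γ^β_{μν} - γ^β_{νμ}, Ω^β_{μν} = γ^β_{μν} + γ^β_{νμ}, and Λ_{μεν} := ∑_δ g_{μδ}Λ^δ_{εν}, with γ lowered skew in the first pair: γ_{αμν} = -γ_{μαν} where γ_{αμν} := ∑_δ g_{αδ} γ^δ_{μν}. Then ∑_ε C^ε (Λ_{μεν} + Λ_{νεμ}) = -φ_{μν}, where C^ε := ∑_δ g^{εδ} C_δ and g is a symmetric invertible matrix with inverse g^{εδ}. -/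
/-!
Write `G_{αμν} = g_{αδ} γ^δ_{μν}` for the lowered contortion, so that `Λ_{αμν} = G_{αμν} - G_{ανμ}`.
Skew-symmetry of `G` in its first pair of indices turns `Λ_{μεν} + Λ_{νεμ}` into
`-(G_{εμν} + G_{ενμ}) = -g_{εδ} Ω^δ_{μν}`, and contracting with `C^ε` raises and lowers the same
index, giving `-C_δ Ω^δ_{μν} = -φ_{μν}`.
-/

open Matrix

theorem Matrix.IsSymm.nonsing_inv_mulVec_vecMul_cancel {ι R : Type*} [Fintype ι] [DecidableEq ι]
    [CommRing R] {g : Matrix ι ι R} (hsymm : g.IsSymm) (hg : IsUnit g.det) (v : ι → R) :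
    (g⁻¹ *ᵥ v) ᵥ* g = v := by
  rw [← mulVec_transpose, hsymm.eq, mulVec_mulVec, mul_nonsing_inv g hg, one_mulVec]

theorem sub_swap_add_sub_swap_of_skew {ι R : Type*} [CommRing R] {G : ι → ι → ι → R}
    (hG : ∀ a b c, G a b c = -G b a c) (μ ε ν : ι) :
    (G μ ε ν - G μ ν ε) + (G ν ε μ - G ν μ ε) = -(G ε μ ν + G ε ν μ) := by
  rw [hG μ ε ν, hG ν ε μ, hG μ ν ε]
  ring

/-- Lemma 4.1(b), first identity: `C^ε (Λ_{μεν} + Λ_{νεμ}) = -φ_{μν}`. -/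
theorem stmt_16 {n : ℕ} (g : Matrix (Fin n) (Fin n) ℝ)
    (hgsymm : ∀ i j, g i j = g j i) (hg : IsUnit g.det)
    (γ : Fin n → Fin n → Fin n → ℝ)
    (hskew : ∀ α μ ν, (∑ δ, g α δ * γ δ μ ν) = -(∑ δ, g μ δ * γ δ α ν))
    (Λ Ω : Fin n → Fin n → Fin n → ℝ)
    (hΛ : ∀ β μ ν, Λ β μ ν = γ β μ ν - γ β ν μ)
    (hΩ : ∀ β μ ν, Ω β μ ν = γ β μ ν + γ β ν μ)
    (Λlow : Fin n → Fin n → Fin n → ℝ)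
    (hΛlow : ∀ μ ε ν, Λlow μ ε ν = ∑ δ, g μ δ * Λ δ ε ν)
    (C : Fin n → ℝ) (Cup : Fin n → ℝ) (hCup : ∀ ε, Cup ε = ∑ δ, g⁻¹ ε δ * C δ)
    (φ : Fin n → Fin n → ℝ) (hφ : ∀ μ ν, φ μ ν = ∑ β, C β * Ω β μ ν) :
    ∀ μ ν, (∑ ε, Cup ε * (Λlow μ ε ν + Λlow ν ε μ)) = -φ μ ν := by
  intro μ ν
  set G : Fin n → Fin n → Fin n → ℝ := fun a b c => ∑ δ, g a δ * γ δ b c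
  have hΛG : ∀ a b c, Λlow a b c = G a b c - G a c b := by
    simp [G, hΛlow, hΛ, mul_sub]
  have hGskew : ∀ a b c, G a b c = -G b a c := hskew
  have hΩG : (fun ε => G ε μ ν + G ε ν μ) = g *ᵥ fun δ => Ω δ μ ν := by
    ext ε
    simp [G, mulVec, dotProduct, hΩ, mul_add, Finset.sum_add_distrib]
  have hsymm : g.IsSymm := Matrix.ext fun i j => hgsymm j i
  calc ∑ ε, Cup ε * (Λlow μ ε ν + Λlow ν ε μ)
      = -(Cup ⬝ᵥ fun ε => G ε μ ν + G ε ν μ) := by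
        rw [dotProduct, ← Finset.sum_neg_distrib]
        refine Finset.sum_congr rfl fun ε _ => ?_
        rw [hΛG, hΛG, sub_swap_add_sub_swap_of_skew hGskew, mul_neg]
    _ = -((Cup ᵥ* g) ⬝ᵥ fun δ => Ω δ μ ν) := by rw [hΩG, dotProduct_mulVec]
    _ = -φ μ ν := by
        rw [show Cup = g⁻¹ *ᵥ C from funext hCup, hsymm.nonsing_inv_mulVec_vecMul_cancel hg, hφ]
        rfl
end

section
/- Let C_μ : Fin n → ℝ, and γ, g as in the previous context (g symmetric invertible, γ_{αμν} := ∑_δ g_{αδ}γ^δ_{μν} skew in the first two indices, Λ^β_{μν} := γ^β_{μν} - γ^β_{νμ}, Λ_{μεν} := ∑_δ g_{μδ}Λ^δ_{εν}). Define γ_{μν} := ∑_α C_α γ_{μν}{}^α where γ_{μν}{}^α := ∑_{δ,ε} g_{μδ} g^{αε} γ^δ_{νε}, and η_{μν} := ∑_β C_β Λ^β_{μν}. Then ∑_ε C^ε (Λ_{μεν} - Λ_{νεμ}) = -(2 γ_{μν} + η_{μν}). -/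
lemma key_contract {n : ℕ} (g : Matrix (Fin n) (Fin n) ℝ)
    (hgsymm : ∀ i j, g i j = g j i) (hg : IsUnit g.det)
    (C Cup : Fin n → ℝ) (hCup : ∀ ε, Cup ε = ∑ δ, g⁻¹ ε δ * C δ)
    (f : Fin n → ℝ) :
    (∑ ε, Cup ε * ∑ δ, g ε δ * f δ) = ∑ δ, C δ * f δ := by
  have hinv : g⁻¹ * g = 1 := Matrix.nonsing_inv_mul g hg
  have hsymm : ∀ i j, g⁻¹ i j = g⁻¹ j i := by
    intro i j
    have ht : Matrix.transpose g = g := Matrix.ext fun a b => hgsymm b a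
    have h2 : Matrix.transpose g⁻¹ = g⁻¹ := by
      rw [Matrix.transpose_nonsing_inv, ht]
    calc g⁻¹ i j = Matrix.transpose g⁻¹ j i := (Matrix.transpose_apply _ _ _).symm
    _ = g⁻¹ j i := congrFun (congrFun h2 j) i
  calc (∑ ε, Cup ε * ∑ δ, g ε δ * f δ)
      = ∑ ε, ∑ δ, ∑ ρ, g⁻¹ ε ρ * C ρ * (g ε δ * f δ) := by
        simp only [hCup, Finset.sum_mul, Finset.mul_sum]
    _ = ∑ δ, ∑ ε, ∑ ρ, g⁻¹ ε ρ * C ρ * (g ε δ * f δ) := Finset.sum_comm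
    _ = ∑ δ, ∑ ρ, ∑ ε, g⁻¹ ε ρ * C ρ * (g ε δ * f δ) :=
        Finset.sum_congr rfl fun δ _ => Finset.sum_comm
    _ = ∑ ρ, ∑ δ, ∑ ε, g⁻¹ ε ρ * C ρ * (g ε δ * f δ) := Finset.sum_comm
    _ = ∑ ρ, ∑ δ, (∑ ε, g⁻¹ ρ ε * g ε δ) * (C ρ * f δ) := by
        refine Finset.sum_congr rfl fun ρ _ => Finset.sum_congr rfl fun δ _ => ?_
        rw [Finset.sum_mul]
        refine Finset.sum_congr rfl fun ε _ => ?_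
        rw [hsymm ρ ε]; ring
    _ = ∑ ρ, ∑ δ, (if ρ = δ then (1:ℝ) else 0) * (C ρ * f δ) := by
        refine Finset.sum_congr rfl fun ρ _ => Finset.sum_congr rfl fun δ _ => ?_
        have h3 : (∑ ε, g⁻¹ ρ ε * g ε δ) = (g⁻¹ * g) ρ δ := by rw [Matrix.mul_apply]
        rw [h3, hinv, Matrix.one_apply]
    _ = ∑ δ, C δ * f δ := by simp

/-- Lemma 4.1(c), first identity: `C^ε (Λ_{μεν} - Λ_{νεμ}) = -(2 γ_{μν} + η_{μν})`. -/
theorem stmt_17 {n : ℕ} (g : Matrix (Fin n) (Fin n) ℝ)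
    (hgsymm : ∀ i j, g i j = g j i) (hg : IsUnit g.det)
    (γ : Fin n → Fin n → Fin n → ℝ)
    (hskew : ∀ α μ ν, (∑ δ, g α δ * γ δ μ ν) = -(∑ δ, g μ δ * γ δ α ν))
    (Λ : Fin n → Fin n → Fin n → ℝ)
    (hΛ : ∀ β μ ν, Λ β μ ν = γ β μ ν - γ β ν μ)
    (Λlow : Fin n → Fin n → Fin n → ℝ)
    (hΛlow : ∀ μ ε ν, Λlow μ ε ν = ∑ δ, g μ δ * Λ δ ε ν)
    (C : Fin n → ℝ) (Cup : Fin n → ℝ) (hCup : ∀ ε, Cup ε = ∑ δ, g⁻¹ ε δ * C δ)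
    (γup : Fin n → Fin n → Fin n → ℝ)
    (hγup : ∀ μ ν α, γup μ ν α = ∑ δ, ∑ ε, g μ δ * g⁻¹ α ε * γ δ ν ε)
    (γbar : Fin n → Fin n → ℝ) (hγbar : ∀ μ ν, γbar μ ν = ∑ α, C α * γup μ ν α)
    (η : Fin n → Fin n → ℝ) (hη : ∀ μ ν, η μ ν = ∑ β, C β * Λ β μ ν) :
    ∀ μ ν, (∑ ε, Cup ε * (Λlow μ ε ν - Λlow ν ε μ)) = -(2 * γbar μ ν + η μ ν) := by
  intro μ ν
  have hsymm : ∀ i j, g⁻¹ i j = g⁻¹ j i := by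
    intro i j
    have ht : Matrix.transpose g = g := Matrix.ext fun a b => hgsymm b a
    have h2 : Matrix.transpose g⁻¹ = g⁻¹ := by
      rw [Matrix.transpose_nonsing_inv, ht]
    calc g⁻¹ i j = Matrix.transpose g⁻¹ j i := (Matrix.transpose_apply _ _ _).symm
    _ = g⁻¹ j i := congrFun (congrFun h2 j) i
  -- γbar expressed as a Cup-contraction
  have hγbar' : ∀ μ ν, γbar μ ν = ∑ ε, Cup ε * ∑ δ, g μ δ * γ δ ν ε := by
    intro μ ν
    rw [hγbar]
    simp only [hγup, hCup, Finset.mul_sum, Finset.sum_mul]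
    refine (Finset.sum_comm).trans ?_
    refine (Finset.sum_congr rfl fun δ _ => Finset.sum_comm).trans ?_
    refine (Finset.sum_comm).trans ?_
    refine Finset.sum_congr rfl fun ε _ => Finset.sum_congr rfl fun δ _ => ?_
    refine Finset.sum_congr rfl fun α _ => ?_
    rw [hsymm α ε]; ring
  -- antisymmetry of γbar
  have hγanti : γbar ν μ = -γbar μ ν := by
    rw [hγbar', hγbar', ← Finset.sum_neg_distrib]
    refine Finset.sum_congr rfl fun ε _ => ?_
    rw [hskew ν μ ε]; ring
  -- lowered Λ split
  have e1 : ∀ a b c, Λlow a b c = (∑ δ, g a δ * γ δ b c) - ∑ δ, g a δ * γ δ c b := by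
    intro a b c
    rw [hΛlow]
    simp only [hΛ, mul_sub]
    exact Finset.sum_sub_distrib _ _
  have t1 : (∑ ε, Cup ε * ∑ δ, g μ δ * γ δ ε ν) = -∑ δ, C δ * γ δ μ ν := by
    have h4 : ∀ ε, (∑ δ, g μ δ * γ δ ε ν) = ∑ δ, g ε δ * (-γ δ μ ν) := by
      intro ε
      have h5 := hskew ε μ ν
      have h6 : (∑ δ, g μ δ * γ δ ε ν) = -∑ δ, g ε δ * γ δ μ ν := by linarith
      rw [h6, ← Finset.sum_neg_distrib]
      exact Finset.sum_congr rfl fun δ _ => by ring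
    simp only [h4]
    rw [key_contract g hgsymm hg C Cup hCup (fun δ => -γ δ μ ν), ← Finset.sum_neg_distrib]
    exact Finset.sum_congr rfl fun δ _ => by ring
  have t2 : (∑ ε, Cup ε * ∑ δ, g ν δ * γ δ ε μ) = -∑ δ, C δ * γ δ ν μ := by
    have h4 : ∀ ε, (∑ δ, g ν δ * γ δ ε μ) = ∑ δ, g ε δ * (-γ δ ν μ) := by
      intro ε
      have h5 := hskew ε ν μ
      have h6 : (∑ δ, g ν δ * γ δ ε μ) = -∑ δ, g ε δ * γ δ ν μ := by linarith
      rw [h6, ← Finset.sum_neg_distrib]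
      exact Finset.sum_congr rfl fun δ _ => by ring
    simp only [h4]
    rw [key_contract g hgsymm hg C Cup hCup (fun δ => -γ δ ν μ), ← Finset.sum_neg_distrib]
    exact Finset.sum_congr rfl fun δ _ => by ring
  have hη' : η μ ν = (∑ δ, C δ * γ δ μ ν) - ∑ δ, C δ * γ δ ν μ := by
    rw [hη]
    simp only [hΛ, mul_sub]
    exact Finset.sum_sub_distrib _ _
  have expand : (∑ ε, Cup ε * (Λlow μ ε ν - Λlow ν ε μ)) =
      ((∑ ε, Cup ε * ∑ δ, g μ δ * γ δ ε ν) - γbar μ ν)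
      - ((∑ ε, Cup ε * ∑ δ, g ν δ * γ δ ε μ) - γbar ν μ) := by
    rw [hγbar' μ ν, hγbar' ν μ]
    simp only [e1, mul_sub, Finset.sum_sub_distrib, sub_sub_sub_comm]
    try ring
  rw [expand, t1, t2, hγanti, hη']
  ring
end
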